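/- arXiv:1209.1677 — 3 statements merged into one kernel-verified Lean document; each statement's English description precedes it below -/
import Mathlib

section
/- With the quantum cluster setup below, the quasi-commutation relation X_n X_{n+1} = q X_{n+1} X_n holds for every n ∈ ℤ. -/
private lemma aux_up {D : Type*} [DivisionRing D] (w : D) (hw : ∀ z : D, w * z = z * w)
    (a : Dˣ) (b c s : D) (hbs : b * s = s * b)
    (hab : (a : D) * b = w * b * a) (hac : (a : D) * c = s) :
    b * c = w * c * b := by
  have hba : b * (↑a⁻¹ : D) = w * (↑a⁻¹ * b) := by
    apply mul_left_cancel₀ a.ne_zero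
    calc (a : D) * (b * ↑a⁻¹) = (w * b * a) * ↑a⁻¹ := by rw [← mul_assoc, hab]
      _ = w * b := by rw [mul_assoc, Units.mul_inv, mul_one]
      _ = (a : D) * (w * (↑a⁻¹ * b)) := by
          rw [← mul_assoc, ← hw, mul_assoc w, ← mul_assoc (a : D), Units.mul_inv, one_mul]
  have hc : c = (↑a⁻¹ : D) * s := by
    rw [← hac, ← mul_assoc, Units.inv_mul, one_mul]
  calc b * c = (b * ↑a⁻¹) * s := by rw [hc, mul_assoc]
    _ = w * (↑a⁻¹ * b * s) := by rw [hba, mul_assoc]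
    _ = w * (↑a⁻¹ * (s * b)) := by rw [mul_assoc, hbs]
    _ = w * c * b := by rw [hc, mul_assoc, mul_assoc]

private lemma aux_down {D : Type*} [DivisionRing D] (w : D) (hw : ∀ z : D, w * z = z * w)
    (c : Dˣ) (a b s : D) (hbs : b * s = s * b)
    (hbc : b * (c : D) = w * c * b) (hac : a * c = s) :
    a * b = w * b * a := by
  have hcb : (↑c⁻¹ : D) * b = w * (b * ↑c⁻¹) := by
    apply mul_right_cancel₀ c.ne_zero
    calc (↑c⁻¹ : D) * b * c = ↑c⁻¹ * (w * c * b) := by rw [mul_assoc, hbc]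
      _ = w * b := by
          rw [← mul_assoc, ← mul_assoc, ← hw, mul_assoc w, Units.inv_mul, mul_one]
      _ = w * (b * ↑c⁻¹) * c := by
          rw [mul_assoc, mul_assoc b, Units.inv_mul, mul_one]
  have ha : a = s * (↑c⁻¹ : D) := by
    rw [← hac, mul_assoc, Units.mul_inv, mul_one]
  calc a * b = s * (↑c⁻¹ * b) := by rw [ha, mul_assoc]
    _ = s * (w * (b * ↑c⁻¹)) := by rw [hcb]
    _ = w * (s * b) * ↑c⁻¹ := by
        rw [← mul_assoc s w, ← hw, mul_assoc w, mul_assoc w (s * b), ← mul_assoc s b]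
    _ = w * b * a := by rw [← hbs, ha, mul_assoc, mul_assoc, mul_assoc]

/-- Rank-2 quantum cluster variables quasi-commute: if `v` is a central unit of a division
ring `D` (`q = v²`), and `(X n)_{n ∈ ℤ}` are units of `D` satisfying the quantum exchange
relation `X (n-1) * X (n+1) = q^(r/2) * X n ^ r + 1` together with `X 1 * X 2 = q * X 2 * X 1`,
then `X n * X (n+1) = q * X (n+1) * X n` for every `n ∈ ℤ`. -/
theorem stmt3 (r : ℕ) (hr : 2 ≤ r) (D : Type*) [DivisionRing D]
    (v : Dˣ) (hv : ∀ z : D, (v : D) * z = z * (v : D))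
    (X : ℤ → Dˣ)
    (hX : ∀ n : ℤ, (X (n - 1) : D) * (X (n + 1) : D) = (v : D) ^ r * (X n : D) ^ r + 1)
    (hX12 : (X 1 : D) * (X 2 : D) = (v : D) ^ 2 * (X 2 : D) * (X 1 : D)) :
    ∀ n : ℤ, (X n : D) * (X (n + 1) : D) = (v : D) ^ 2 * (X (n + 1) : D) * (X n : D) := by
  have hvz : ∀ z : D, Commute (v : D) z := hv
  have hw : ∀ z : D, (v : D) ^ 2 * z = z * (v : D) ^ 2 := fun z => (hvz z).pow_left 2
  set P : ℤ → Prop := fun n =>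
    (X n : D) * (X (n + 1) : D) = (v : D) ^ 2 * (X (n + 1) : D) * (X n : D) with hP
  have hbs : ∀ m : ℤ, (X m : D) * ((v : D) ^ r * (X m : D) ^ r + 1)
      = ((v : D) ^ r * (X m : D) ^ r + 1) * (X m : D) := by
    intro m
    exact ((((hvz (X m : D)).pow_left r).symm.mul_right
      ((Commute.refl (X m : D)).pow_right r)).add_right (Commute.one_right _))
  have step_up : ∀ n : ℤ, P n → P (n + 1) := by
    intro n h
    have hx : (X n : D) * (X (n + 2) : D) = (v : D) ^ r * (X (n + 1) : D) ^ r + 1 := by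
      have := hX (n + 1)
      rw [show n + 1 - 1 = n by ring, show n + 1 + 1 = n + 2 by ring] at this
      exact this
    show (X (n + 1) : D) * (X (n + 1 + 1) : D)
        = (v : D) ^ 2 * (X (n + 1 + 1) : D) * (X (n + 1) : D)
    rw [show n + 1 + 1 = n + 2 by ring]
    exact aux_up ((v : D) ^ 2) hw (X n) (X (n + 1) : D) (X (n + 2) : D) _
      (hbs (n + 1)) h hx
  have step_down : ∀ n : ℤ, P n → P (n - 1) := by
    intro n h
    have key : (X (n - 1) : D) * (X n : D) = (v : D) ^ 2 * (X n : D) * (X (n - 1) : D) :=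
      aux_down ((v : D) ^ 2) hw (X (n + 1)) (X (n - 1) : D) (X n : D) _
        (hbs n) h (hX n)
    show (X (n - 1) : D) * (X (n - 1 + 1) : D)
        = (v : D) ^ 2 * (X (n - 1 + 1) : D) * (X (n - 1) : D)
    rw [show n - 1 + 1 = n by ring]
    exact key
  have base1 : P 1 := by
    show (X 1 : D) * (X (1 + 1) : D) = (v : D) ^ 2 * (X (1 + 1) : D) * (X 1 : D)
    rw [show (1 : ℤ) + 1 = 2 by norm_num]
    exact hX12
  have base0 : P 0 := by
    have := step_down 1 base1
    rwa [show (1 : ℤ) - 1 = 0 by norm_num] at this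
  intro n
  induction n using Int.induction_on with
  | zero => exact base0
  | succ k ih => exact step_up k ih
  | pred k ih =>
      exact step_down (-(k : ℤ)) ih
end

section
/- Suppose in addition that x_0 = v·X_1 and y_0 = v^{−1}·X_2, where v is a central invertible element of D with q = v², and (X_n)_{n≥1} is a sequence of invertible elements of D satisfying X_1X_2 = qX_2X_1 and X_{n−1}X_{n+1} = v^r X_n^r + 1 for all n ≥ 2. Then for every integer n ≥ 0, x_n = v·X_{n+1}. (In other words, the image of the noncommutative cluster variable x_n under the map x ↦ q^{1/2}X_1, y ↦ q^{−1/2}X_2 equals q^{1/2}X_{n+1}.) -/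
/-- Noncommutative cluster variables specialize to quantum cluster variables.
Let `D` be a division ring, `(x n)`, `(y n)` units of `D` satisfying the Kontsevich
recursion `x (n+1) = x n * y n * (x n)⁻¹`, `y (n+1) = (1 + (y n)^r) * (x n)⁻¹`.
Let `v` be a central unit (`q = v²`) and `(X n)_{n ≥ 1}` units with
`X 1 * X 2 = q * X 2 * X 1` and `X (n-1) * X (n+1) = v^r * X n ^ r + 1` for `n ≥ 2`.
If `x 0 = v * X 1` and `y 0 = v⁻¹ * X 2`, then `x n = v * X (n+1)` for all `n ≥ 0`. -/
theorem stmt4 (r : ℕ) (hr : 2 ≤ r) (D : Type*) [DivisionRing D]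
    (x y : ℕ → Dˣ)
    (hx : ∀ n : ℕ, (x (n + 1) : D) = (x n : D) * (y n : D) * (((x n)⁻¹ : Dˣ) : D))
    (hy : ∀ n : ℕ, (y (n + 1) : D) = (1 + (y n : D) ^ r) * (((x n)⁻¹ : Dˣ) : D))
    (v : Dˣ) (hv : ∀ z : D, (v : D) * z = z * (v : D))
    (X : ℕ → Dˣ)
    (hX12 : (X 1 : D) * (X 2 : D) = (v : D) ^ 2 * (X 2 : D) * (X 1 : D))
    (hX : ∀ n : ℕ, 2 ≤ n →
      (X (n - 1) : D) * (X (n + 1) : D) = (v : D) ^ r * (X n : D) ^ r + 1)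
    (hx0 : x 0 = v * X 1) (hy0 : y 0 = v⁻¹ * X 2) :
    ∀ n : ℕ, x n = v * X (n + 1) := by
  set u : D := (v : D) with hu_def
  have hu : u ≠ 0 := v.ne_zero
  have hvc : ∀ z : D, Commute u z := fun z => hv z
  have hvinv : ∀ z : D, Commute u⁻¹ z := fun z => (hvc z).inv_left₀
  -- shuffle helpers
  have sh : ∀ a b : D, u * a * (u * b) = u^2 * a * b := by
    intro a b
    calc u * a * (u * b) = u * (a * u) * b := by simp only [mul_assoc]
      _ = u * (u * a) * b := by rw [← (hvc a).eq]
      _ = u^2 * a * b := by rw [pow_two]; simp only [mul_assoc]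
  have sh2 : ∀ a b : D, u * a * (u⁻¹ * b) = a * b := by
    intro a b
    calc u * a * (u⁻¹ * b) = u * (a * u⁻¹) * b := by simp only [mul_assoc]
      _ = u * (u⁻¹ * a) * b := by rw [← (hvinv a).eq]
      _ = a * b := by rw [← mul_assoc, mul_inv_cancel₀ hu, one_mul]
  have shinv : ∀ a b : D, u⁻¹ * a * (u * b) = a * b := by
    intro a b
    calc u⁻¹ * a * (u * b) = u⁻¹ * (a * u) * b := by simp only [mul_assoc]
      _ = u⁻¹ * (u * a) * b := by rw [← (hvc a).eq]
      _ = a * b := by rw [← mul_assoc, inv_mul_cancel₀ hu, one_mul]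
  -- recursions in multiplied-out form
  have hx' : ∀ n, (x (n + 1) : D) * x n = (x n : D) * y n := by
    intro n
    rw [hx n, mul_assoc, Units.inv_mul, mul_one]
  have hy' : ∀ n, (y (n + 1) : D) * x n = 1 + (y n : D) ^ r := by
    intro n
    rw [hy n, mul_assoc, Units.inv_mul, mul_one]
  -- consecutive quantum commutation
  have hcomm : ∀ n : ℕ, (X (n+1) : D) * X (n+2) = u^2 * X (n+2) * X (n+1) := by
    intro n
    induction n with
    | zero => simpa using hX12
    | succ m ih =>
      have key : (X (m+1) : D) * X (m+3) = u^r * (X (m+2):D)^r + 1 := by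
        have := hX (m+2) (by omega)
        simpa [show m+2-1 = m+1 from rfl] using this
      have c1 : (X (m+2) : D) * ((X (m+1):D) * X (m+3)) =
          ((X (m+1):D) * X (m+3)) * X (m+2) := by
        rw [key]
        exact ((((hvc _).symm.pow_right r).mul_right
          ((Commute.refl _).pow_right r)).add_right (Commute.one_right _))
      apply mul_left_cancel₀ (X (m+1)).ne_zero
      show (X (m+1):D) * ((X (m+2):D) * X (m+3))
          = (X (m+1):D) * (u^2 * X (m+3) * X (m+2))
      calc (X (m+1) : D) * ((X (m+2):D) * X (m+3))
          = ((X (m+1):D) * X (m+2)) * X (m+3) := (mul_assoc _ _ _).symm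
        _ = (u^2 * X (m+2) * X (m+1)) * X (m+3) := by rw [ih]
        _ = u^2 * ((X (m+2):D) * ((X (m+1):D) * X (m+3))) := by
            simp only [mul_assoc]
        _ = u^2 * (((X (m+1):D) * X (m+3)) * X (m+2)) := by rw [c1]
        _ = (X (m+1):D) * (u^2 * X (m+3) * X (m+2)) := by
            simp only [← mul_assoc]
            rw [((hvc (X (m+1):D)).pow_left 2).eq]
  -- power commutation
  have hpow : ∀ n k : ℕ, (X (n+1) : D) * (X (n+2):D)^k
      = u^(2*k) * (X (n+2):D)^k * X (n+1) := by
    intro n k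
    induction k with
    | zero => simp
    | succ j ih =>
      calc (X (n+1) : D) * (X (n+2):D)^(j+1)
          = ((X (n+1):D) * (X (n+2):D)^j) * X (n+2) := by
            rw [pow_succ, ← mul_assoc]
        _ = u^(2*j) * (X (n+2):D)^j * X (n+1) * X (n+2) := by rw [ih]
        _ = u^(2*j) * (X (n+2):D)^j * ((X (n+1):D) * X (n+2)) := by
            rw [mul_assoc]
        _ = u^(2*j) * (X (n+2):D)^j * (u^2 * X (n+2) * X (n+1)) := by
            rw [hcomm n]
        _ = u^(2*(j+1)) * (X (n+2):D)^(j+1) * X (n+1) := by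
            simp only [← mul_assoc]
            rw [mul_assoc (u^(2*j)) ((X (n+2):D)^j) (u^2),
              ((hvc ((X (n+2):D)^j)).pow_left 2).eq.symm,
              show u^(2*j) * (u^2 * (X (n+2):D)^j) = u^(2*(j+1)) * (X (n+2):D)^j by
                rw [← mul_assoc, ← pow_add]; ring_nf,
              mul_assoc (u^(2*(j+1))) _ _, ← pow_succ]
  -- main joint induction
  have main : ∀ n, (x n : D) = u * X (n+1) ∧ (y n : D) = u⁻¹ * X (n+2) := by
    intro n
    induction n with
    | zero =>
      constructor
      · rw [hx0]; simp; rfl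
      · rw [hy0]; simp; rfl
    | succ m ih =>
      obtain ⟨ihx, ihy⟩ := ih
      have hxm : (x m : D) ≠ 0 := (x m).ne_zero
      -- value of x (m+1)
      have hxval : (x (m+1) : D) = u * X (m+2) := by
        apply mul_right_cancel₀ hxm
        rw [hx' m, ihx, ihy]
        calc (u * X (m+1)) * (u⁻¹ * (X (m+2):D))
            = (X (m+1):D) * X (m+2) := sh2 _ _
          _ = u^2 * X (m+2) * X (m+1) := hcomm m
          _ = u * X (m+2) * (u * X (m+1)) := (sh _ _).symm
      -- key identity for y (m+1)
      have key : (X (m+1) : D) * X (m+3) = u^r * (X (m+2):D)^r + 1 := by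
        have := hX (m+2) (by omega)
        simpa [show m+2-1 = m+1 from rfl] using this
      have step : (X (m+1):D) * (u⁻¹^r * (X (m+2):D)^r)
          = u^r * (X (m+2):D)^r * X (m+1) := by
        calc (X (m+1):D) * (u⁻¹^r * (X (m+2):D)^r)
            = u⁻¹^r * ((X (m+1):D) * (X (m+2):D)^r) := by
              rw [← mul_assoc, ← ((hvinv (X (m+1):D)).pow_left r).eq, mul_assoc]
          _ = u⁻¹^r * (u^(2*r) * (X (m+2):D)^r * X (m+1)) := by rw [hpow m r]
          _ = u^r * (X (m+2):D)^r * X (m+1) := by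
              simp only [← mul_assoc]
              congr 2
              rw [inv_pow, two_mul, pow_add, ← mul_assoc,
                inv_mul_cancel₀ (pow_ne_zero r hu), one_mul]
      have key2 : (X (m+3) : D) * X (m+1) = 1 + u⁻¹^r * (X (m+2):D)^r := by
        apply mul_left_cancel₀ (X (m+1)).ne_zero
        calc (X (m+1):D) * ((X (m+3):D) * X (m+1))
            = ((X (m+1):D) * X (m+3)) * X (m+1) := (mul_assoc _ _ _).symm
          _ = (u^r * (X (m+2):D)^r + 1) * X (m+1) := by rw [key]
          _ = u^r * (X (m+2):D)^r * X (m+1) + X (m+1) := by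
              rw [add_mul, one_mul]
          _ = (X (m+1):D) * (1 + u⁻¹^r * (X (m+2):D)^r) := by
              rw [mul_add, mul_one, step, add_comm]
      -- value of y (m+1)
      have hyval : (y (m+1) : D) = u⁻¹ * X (m+3) := by
        apply mul_right_cancel₀ hxm
        rw [hy' m, ihy, ihx]
        calc (1 : D) + (u⁻¹ * X (m+2))^r
            = 1 + u⁻¹^r * (X (m+2):D)^r := by
              rw [(hvinv (X (m+2):D)).mul_pow]
          _ = (X (m+3):D) * X (m+1) := key2.symm
          _ = u⁻¹ * X (m+3) * (u * X (m+1)) := (shinv _ _).symm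
      exact ⟨hxval, hyval⟩
  intro n
  ext
  rw [(main n).1]
  simp; rfl
end

section
/- Let R be a commutative ring, q an invertible element of R, and y ∈ R. Then for all integers a ≤ b: ∏_{t=a}^{b} (q^t y + 1) = Σ_{i=0}^{b−a+1} q^{i(i−1)/2 + a·i} [b−a+1 choose i]_q y^i, where Gaussian binomials are evaluated at q (and q^t, q^{a·i} denote integer powers of the unit q). -/
/-- Gaussian binomial coefficient via the q-Pascal recursion
`[n+1, k+1]_q = [n, k]_q + q^(k+1) * [n, k+1]_q`. -/
def qPascal {R : Type*} [CommRing R] (q : R) : ℕ → ℕ → R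
  | _, 0 => 1
  | 0, _ + 1 => 0
  | n + 1, k + 1 => qPascal q n k + q ^ (k + 1) * qPascal q n (k + 1)

/-- Gaussian binomial `[n choose k]_q` for integers `n`, `k`, evaluated at an element `q`
of a commutative ring; it is `0` when `k < 0` or `k > n`. -/
def qBinom {R : Type*} [CommRing R] (q : R) (n k : ℤ) : R :=
  if 0 ≤ k ∧ k ≤ n then qPascal q n.toNat k.toNat else 0

lemma qPascal_zero {R : Type*} [CommRing R] (q : R) (n : ℕ) : qPascal q n 0 = 1 := by
  cases n <;> rfl

lemma qPascal_eq_zero {R : Type*} [CommRing R] (q : R) :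
    ∀ n k : ℕ, n < k → qPascal q n k = 0 := by
  intro n
  induction n with
  | zero => intro k hk; match k, hk with | k + 1, _ => rfl
  | succ n ih =>
    intro k hk
    match k, hk with
    | k + 1, hk =>
      rw [qPascal, ih k (by omega), ih (k + 1) (by omega)]
      ring

lemma tri_succ (i : ℕ) : ((i + 1) * i / 2 : ℕ) = i * (i - 1) / 2 + i := by
  have h : (i + 1) * i = i * (i - 1) + 2 * i := by
    cases i with
    | zero => rfl
    | succ k => simp [Nat.succ_sub_one]; ring
  omega

lemma key {R : Type*} [CommRing R] (q : Rˣ) (y : R) :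
    ∀ n : ℕ, ∀ a : ℤ,
      ∏ j ∈ Finset.range n, (((q ^ (a + (j : ℤ)) : Rˣ) : R) * y + 1) =
        ∑ i ∈ Finset.range (n + 1),
          ((q ^ (((i * (i - 1) / 2 : ℕ) : ℤ) + a * (i : ℤ)) : Rˣ) : R) *
            qPascal (q : R) n i * y ^ i := by
  intro n
  induction n with
  | zero =>
    intro a
    simp [qPascal_zero]
  | succ n ih =>
    intro a
    set A : ℕ → R := fun i =>
      ((q ^ (((i * (i - 1) / 2 : ℕ) : ℤ) + (a + 1) * (i : ℤ)) : Rˣ) : R) *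
        qPascal (q : R) n i * y ^ i with hA
    set B : ℕ → R := fun i =>
      ((q ^ (((i * (i - 1) / 2 : ℕ) : ℤ) + a * (i : ℤ)) : Rˣ) : R) *
        qPascal (q : R) (n + 1) i * y ^ i with hB
    rw [Finset.prod_range_succ']
    have hshift : ∀ j ∈ Finset.range n,
        (((q ^ (a + ((j + 1 : ℕ) : ℤ)) : Rˣ) : R) * y + 1) =
        (((q ^ ((a + 1) + (j : ℤ)) : Rˣ) : R) * y + 1) := by
      intro j _
      congr 3
      push_cast
      ring
    have ih' : ∏ j ∈ Finset.range n, (((q ^ ((a + 1) + (j : ℤ)) : Rˣ) : R) * y + 1) =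
        ∑ i ∈ Finset.range (n + 1), A i := ih (a + 1)
    rw [Finset.prod_congr rfl hshift, ih', show a + ((0 : ℕ) : ℤ) = a by simp]
    have step : ∀ i ∈ Finset.range (n + 1),
        B (i + 1) = A i * (((q ^ a : Rˣ) : R) * y) + A (i + 1) := by
      intro i _
      have htri : (((i + 1) * (i + 1 - 1) / 2 : ℕ) : ℤ) =
          ((i * (i - 1) / 2 : ℕ) : ℤ) + i := by
        rw [Nat.add_sub_cancel, tri_succ]; push_cast; ring
      have hp1 : ((q ^ ((((i + 1) * (i + 1 - 1) / 2 : ℕ) : ℤ) + a * ((i : ℤ) + 1)) : Rˣ) : R) =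
          ((q ^ (((i * (i - 1) / 2 : ℕ) : ℤ) + (a + 1) * (i : ℤ)) : Rˣ) : R) *
            ((q ^ a : Rˣ) : R) := by
        rw [← Units.val_mul, ← zpow_add]
        congr 2
        rw [htri]; ring
      have hp2 : ((q ^ ((((i + 1) * (i + 1 - 1) / 2 : ℕ) : ℤ) + a * ((i : ℤ) + 1)) : Rˣ) : R) *
            (q : R) ^ (i + 1) =
          ((q ^ ((((i + 1) * (i + 1 - 1) / 2 : ℕ) : ℤ) + (a + 1) * ((i : ℤ) + 1)) : Rˣ) : R) := by
        rw [← Units.val_pow_eq_pow_val, ← zpow_natCast q (i + 1), ← Units.val_mul, ← zpow_add]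
        congr 2
        push_cast
        ring
      simp only [hA, hB, qPascal]
      push_cast
      push_cast at hp1 hp2
      linear_combination (qPascal (q : R) n i * y ^ (i + 1)) * hp1 +
        (qPascal (q : R) n (i + 1) * y ^ (i + 1)) * hp2
    rw [Finset.sum_range_succ' B (n + 1), Finset.sum_congr rfl step,
      Finset.sum_add_distrib, ← Finset.sum_mul]
    have hA0 : A 0 = 1 := by simp [hA, qPascal_zero]
    have hB0 : B 0 = 1 := by simp [hB, qPascal_zero]
    have hAtop : A (n + 1) = 0 := by
      simp [hA, qPascal_eq_zero (q : R) n (n + 1) (by omega)]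
    have hsplit : ∑ i ∈ Finset.range (n + 1), A i =
        ∑ i ∈ Finset.range (n + 1), A (i + 1) + B 0 := by
      rw [Finset.sum_range_succ' A n, Finset.sum_range_succ (fun i => A (i + 1)) n,
        hAtop, hA0, hB0, add_zero]
    calc (∑ i ∈ Finset.range (n + 1), A i) * (((q ^ a : Rˣ) : R) * y + 1)
        = (∑ i ∈ Finset.range (n + 1), A i) * (((q ^ a : Rˣ) : R) * y) +
          ∑ i ∈ Finset.range (n + 1), A i := by ring
      _ = (∑ i ∈ Finset.range (n + 1), A i) * (((q ^ a : Rˣ) : R) * y) +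
          (∑ i ∈ Finset.range (n + 1), A (i + 1) + B 0) := by rw [hsplit]
      _ = _ := by ring

/-- For a commutative ring `R`, a unit `q` of `R`, `y ∈ R` and integers `a ≤ b`:
`∏_{t=a}^{b} (q^t y + 1) = ∑_{i=0}^{b-a+1} q^(i(i-1)/2 + a i) [b-a+1 choose i]_q y^i`. -/
theorem stmt13 (R : Type*) [CommRing R] (q : Rˣ) (y : R) (a b : ℤ) (hab : a ≤ b) :
    ∏ t ∈ Finset.Icc a b, (((q ^ t : Rˣ) : R) * y + 1) =
      ∑ i ∈ Finset.range ((b - a + 1).toNat + 1),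
        ((q ^ (((i * (i - 1) / 2 : ℕ) : ℤ) + a * (i : ℤ)) : Rˣ) : R) *
          qBinom (q : R) (b - a + 1) (i : ℤ) * y ^ i := by
  set n : ℕ := (b - a + 1).toNat with hn
  have hn1 : (n : ℤ) = b - a + 1 := by omega
  have hIcc : Finset.Icc a b =
      Finset.map ⟨fun j : ℕ => a + (j : ℤ), show Function.Injective (fun j : ℕ => a + (j : ℤ)) from fun x y h => by simp at h; omega⟩ (Finset.range n) := by
    ext t
    simp only [Finset.mem_Icc, Finset.mem_map, Finset.mem_range, Function.Embedding.coeFn_mk]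
    constructor
    · rintro ⟨h1, h2⟩
      exact ⟨(t - a).toNat, by omega, by omega⟩
    · rintro ⟨j, hj, rfl⟩
      omega
  rw [hIcc, Finset.prod_map]
  simp only [Function.Embedding.coeFn_mk]
  rw [key q y n a]
  apply Finset.sum_congr rfl
  intro i hi
  simp only [Finset.mem_range] at hi
  have hcond : (0 : ℤ) ≤ (i : ℤ) ∧ (i : ℤ) ≤ b - a + 1 := ⟨by positivity, by omega⟩
  rw [qBinom, if_pos hcond]
  simp [hn]
end
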